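/- Let X = (X_γ)_{γ∈Γ} be a centered, square-integrable, weakly stationary process indexed by Γ = ℚ_p/ℤ_p whose covariances c_γ = Cov(X_γ, X_0) satisfy: (1) Σ_γ c_γ = 0, and (2) Σ_{|γ| > p^n} |c_γ| = O(p^{-n}) as n → ∞. Suppose the spectral measure of X is f·μ on ℤ_p with spectral density f(x) = Σ_γ c_γ·χ(γ·x) ≥ 0. Then ∫_{ℤ_p} f(x)^{-1} dμ(x) = ∞. -/

import Mathlib

open MeasureTheory
open scoped ENNReal NNReal

noncomputable instance padicMS (p : ℕ) [Fact p.Prime] : MeasurableSpace ℚ_[p] := borel _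
instance padicBS (p : ℕ) [Fact p.Prime] : BorelSpace ℚ_[p] := ⟨rfl⟩

/-- The Haar measure on `ℚ_[p]`, normalized so that `ℤ_[p]` (the closed unit ball) has measure 1. -/
noncomputable def padicHaar (p : ℕ) [Fact p.Prime] : Measure ℚ_[p] :=
  Measure.addHaarMeasure
    ⟨⟨Metric.closedBall 0 1, isCompact_closedBall 0 1⟩,
      ⟨0, Metric.ball_subset_interior_closedBall (Metric.mem_ball_self one_pos)⟩⟩

/-- `χ` is the standard additive character `x ↦ exp(2πi·{x}_p)` of `ℚ_[p]`: whenever `r ∈ [0,1)`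
is a rational of the form `a/p^k` (i.e. `r ∈ ℤ[1/p]`) with `x - r ∈ ℤ_p`, then
`χ x = exp(2πi r)`.  (Such an `r` always exists and is unique, so this characterizes `χ`.) -/
def IsStdChar (p : ℕ) [Fact p.Prime] (χ : ℚ_[p] → ℂ) : Prop :=
  ∀ (x : ℚ_[p]) (r : ℚ), 0 ≤ r → r < 1 → (∃ (a : ℤ) (k : ℕ), r = (a : ℚ) / (p : ℚ) ^ k) →
    ‖x - (r : ℚ_[p])‖ ≤ 1 → χ x = Complex.exp (2 * Real.pi * Complex.I * (r : ℂ))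

/-- The closed ball `{x : ℚ_[p] | ‖x‖ ≤ p^k}` as an additive subgroup of `ℚ_[p]`;
for `k = 0` this is `ℤ_p`, for `k = -1` it is `pℤ_p`, for `k = m` it is `p^{-m}ℤ_p`. -/
def ballAddSubgroup (p : ℕ) [Fact p.Prime] (k : ℤ) : AddSubgroup ℚ_[p] where
  carrier := {x : ℚ_[p] | ‖x‖ ≤ (p : ℝ) ^ k}
  zero_mem' := by
    have : (0:ℝ) < (p : ℝ) ^ k := by
      have : (0:ℝ) < (p : ℝ) := by exact_mod_cast (Fact.out : p.Prime).pos
      positivity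
    simpa using this.le
  add_mem' := fun ha hb => le_trans (Padic.nonarchimedean _ _) (max_le ha hb)
  neg_mem' := fun ha => by simpa using ha

instance padicHaar_addLeftInvariant (p : ℕ) [Fact p.Prime] :
    (padicHaar p).IsAddLeftInvariant := by
  unfold padicHaar; infer_instance

lemma padicHaar_unitBall (p : ℕ) [Fact p.Prime] :
    padicHaar p (Metric.closedBall (0 : ℚ_[p]) 1) = 1 :=
  Measure.addHaarMeasure_self

lemma padicHaar_ball (p : ℕ) [Fact p.Prime] (n : ℕ) :
    padicHaar p (Metric.closedBall (0 : ℚ_[p]) ((p : ℝ) ^ (-(n : ℤ)))) =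
      ((p : ℝ≥0∞) ^ n)⁻¹ := by
  have hp : p.Prime := Fact.out
  set μ := padicHaar p
  set B : Set ℚ_[p] := Metric.closedBall (0 : ℚ_[p]) ((p : ℝ) ^ (-(n : ℤ))) with hB
  have hBmem : ∀ x : ℚ_[p], x ∈ B ↔ ‖x‖ ≤ (p : ℝ) ^ (-(n : ℤ)) := by
    intro x; simp [hB, Metric.mem_closedBall, dist_eq_norm]
  have hBmeas : MeasurableSet B := Metric.isClosed_closedBall.measurableSet
  set T : ℕ → Set ℚ_[p] := fun a => ((-(a : ℚ_[p])) + ·) ⁻¹' B with hT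
  have hTmem : ∀ a (x : ℚ_[p]), x ∈ T a ↔ ‖x - (a : ℚ_[p])‖ ≤ (p : ℝ) ^ (-(n : ℤ)) := by
    intro a x
    simp only [hT, Set.mem_preimage, hBmem]
    rw [show -(a : ℚ_[p]) + x = x - a by ring]
  have hTmeas : ∀ a, MeasurableSet (T a) :=
    fun a => hBmeas.preimage (measurable_const_add _)
  have hTμ : ∀ a, μ (T a) = μ B := fun a => measure_preimage_add μ _ B
  have hcover : Metric.closedBall (0 : ℚ_[p]) 1 = ⋃ a ∈ Finset.range (p ^ n), T a := by
    ext x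
    simp only [Metric.mem_closedBall, dist_zero_right, Set.mem_iUnion, Finset.mem_range]
    constructor
    · intro hx
      set z : ℤ_[p] := ⟨x, hx⟩ with hz
      refine ⟨z.appr n, z.appr_lt n, ?_⟩
      rw [hTmem]
      have h1 : (z - (z.appr n : ℤ_[p])) ∈ Ideal.span {(p : ℤ_[p]) ^ n} := z.appr_spec n
      have h2 : ‖z - (z.appr n : ℤ_[p])‖ ≤ (p : ℝ) ^ (-(n : ℤ)) :=
        (PadicInt.norm_le_pow_iff_mem_span_pow _ n).2 h1
      have h3 : ((z - (z.appr n : ℤ_[p]) : ℤ_[p]) : ℚ_[p]) = x - (z.appr n : ℚ_[p]) := by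
        rfl
      rwa [PadicInt.norm_def, h3] at h2
    · rintro ⟨a, ha, hx⟩
      rw [hTmem] at hx
      have h1 : ‖(a : ℚ_[p])‖ ≤ 1 := by
        have := Padic.norm_int_le_one (p := p) (a : ℤ)
        simpa using this
      have h2 : (p : ℝ) ^ (-(n : ℤ)) ≤ 1 := by
        apply zpow_le_one_of_nonpos₀
        · exact_mod_cast hp.one_lt.le
        · omega
      calc ‖x‖ = ‖(x - a) + (a : ℚ_[p])‖ := by ring_nf
        _ ≤ max ‖x - (a : ℚ_[p])‖ ‖(a : ℚ_[p])‖ := Padic.nonarchimedean _ _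
        _ ≤ 1 := max_le (hx.trans h2) h1
  have hdisj : (Finset.range (p ^ n) : Set ℕ).PairwiseDisjoint T := by
    intro a ha b hb hab
    simp only [Finset.coe_range, Set.mem_Iio] at ha hb
    rw [Function.onFun, Set.disjoint_left]
    intro x hxa hxb
    rw [hTmem] at hxa hxb
    have h1 : ‖(((a : ℤ) - (b : ℤ) : ℤ) : ℚ_[p])‖ ≤ (p : ℝ) ^ (-(n : ℤ)) := by
      have he : (((a : ℤ) - (b : ℤ) : ℤ) : ℚ_[p]) = (x - b) - (x - a) := by push_cast; ring
      rw [he, sub_sub_sub_cancel_left]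
      calc ‖(a:ℚ_[p]) - b‖ = ‖((a:ℚ_[p]) - x) + (x - b)‖ := by ring_nf
        _ ≤ max ‖(a:ℚ_[p]) - x‖ ‖x - (b:ℚ_[p])‖ := Padic.nonarchimedean _ _
        _ ≤ (p : ℝ) ^ (-(n : ℤ)) := by
            rw [show (a:ℚ_[p]) - x = -(x - a) by ring, norm_neg]
            exact max_le hxa hxb
    rw [Padic.norm_int_le_pow_iff_dvd] at h1
    have h2 : ((a : ℤ) - b) = 0 := by
      apply Int.eq_zero_of_abs_lt_dvd h1
      have ha' : (a : ℤ) < (p:ℤ) ^ n := by exact_mod_cast ha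
      have hb' : (b : ℤ) < (p:ℤ) ^ n := by exact_mod_cast hb
      rw [abs_lt]; omega
    exact hab (by exact_mod_cast sub_eq_zero.mp h2)
  have hsum : μ (Metric.closedBall (0 : ℚ_[p]) 1) = (p : ℝ≥0∞) ^ n * μ B := by
    rw [hcover, measure_biUnion_finset hdisj (fun a _ => hTmeas a)]
    simp only [hTμ, Finset.sum_const, Finset.card_range, nsmul_eq_mul]
    push_cast
    ring
  have h1 : μ (Metric.closedBall (0 : ℚ_[p]) 1) = 1 := Measure.addHaarMeasure_self
  rw [h1] at hsum
  have hpn0 : (p : ℝ≥0∞) ^ n ≠ 0 := by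
    have : (p : ℝ≥0∞) ≠ 0 := by exact_mod_cast hp.pos.ne'
    positivity
  have hpnt : (p : ℝ≥0∞) ^ n ≠ ⊤ := by
    exact_mod_cast (by simp : ((p^n : ℕ) : ℝ≥0∞) ≠ ⊤)
  calc μ B = ((p : ℝ≥0∞) ^ n)⁻¹ * ((p : ℝ≥0∞) ^ n * μ B) := by
        rw [← mul_assoc, ENNReal.inv_mul_cancel hpn0 hpnt, one_mul]
    _ = ((p : ℝ≥0∞) ^ n)⁻¹ := by rw [← hsum, mul_one]

lemma stdChar_one {p : ℕ} [Fact p.Prime] {χ : ℚ_[p] → ℂ} (hχ : IsStdChar p χ)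
    (y : ℚ_[p]) (hy : ‖y‖ ≤ 1) : χ y = 1 := by
  have h := hχ y 0 le_rfl one_pos ⟨0, 0, by norm_num⟩ (by simpa using hy)
  simpa using h

lemma stdChar_norm {p : ℕ} [Fact p.Prime] {χ : ℚ_[p] → ℂ} (hχ : IsStdChar p χ)
    (y : ℚ_[p]) : ‖χ y‖ = 1 := by
  have hp : p.Prime := Fact.out
  have hp1 : (1 : ℝ) < p := by exact_mod_cast hp.one_lt
  have hpR : (0:ℝ) < p := by positivity
  have hpQ : (0:ℚ) < p := by exact_mod_cast hp.pos
  obtain ⟨k, hk'⟩ := pow_unbounded_of_one_lt ‖y‖ hp1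
  have hk : ‖y‖ ≤ (p : ℝ) ^ k := hk'.le
  have hpk : ‖(p : ℚ_[p]) ^ k‖ = (p : ℝ) ^ (-(k:ℤ)) := Padic.norm_p_pow k
  have hyk : ‖y * (p : ℚ_[p]) ^ k‖ ≤ 1 := by
    rw [norm_mul, hpk]
    calc ‖y‖ * (p:ℝ) ^ (-(k:ℤ)) ≤ (p:ℝ)^k * (p:ℝ)^(-(k:ℤ)) := by
          apply mul_le_mul_of_nonneg_right hk (by positivity)
      _ = 1 := by
          rw [← zpow_natCast (p:ℝ), ← zpow_add₀ (by positivity : (p:ℝ) ≠ 0)]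
          simp
  set z : ℤ_[p] := ⟨y * (p : ℚ_[p]) ^ k, hyk⟩ with hz
  set a : ℕ := z.appr k with ha
  have halt : a < p ^ k := z.appr_lt k
  have hr0 : (0:ℚ) ≤ (a : ℚ) / (p : ℚ) ^ k := by positivity
  have hr1 : (a : ℚ) / (p : ℚ) ^ k < 1 := by
    rw [div_lt_one (by positivity)]
    exact_mod_cast halt
  have hnorm : ‖y - (((a : ℚ) / (p : ℚ) ^ k : ℚ) : ℚ_[p])‖ ≤ 1 := by
    have hcast : (((a : ℚ) / (p : ℚ) ^ k : ℚ) : ℚ_[p]) = (a : ℚ_[p]) / (p : ℚ_[p]) ^ k := by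
      push_cast; ring
    have hspec : ‖z - (a : ℤ_[p])‖ ≤ (p : ℝ) ^ (-(k:ℤ)) :=
      (PadicInt.norm_le_pow_iff_mem_span_pow _ k).2 (z.appr_spec k)
    have hcoe : ((z - (a : ℤ_[p]) : ℤ_[p]) : ℚ_[p]) = y * (p:ℚ_[p])^k - (a : ℚ_[p]) := by
      rfl
    rw [PadicInt.norm_def, hcoe] at hspec
    have hpk0 : ((p:ℚ_[p])^k) ≠ 0 := by
      apply pow_ne_zero
      exact_mod_cast hp.ne_zero
    have heq : y - (((a : ℚ) / (p : ℚ) ^ k : ℚ) : ℚ_[p])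
        = (y * (p:ℚ_[p])^k - (a : ℚ_[p])) / (p:ℚ_[p])^k := by
      rw [hcast]; field_simp
    rw [heq, norm_div, hpk]
    calc ‖y * (p:ℚ_[p])^k - (a:ℚ_[p])‖ / (p:ℝ)^(-(k:ℤ))
        ≤ (p:ℝ)^(-(k:ℤ)) / (p:ℝ)^(-(k:ℤ)) := by gcongr
      _ = 1 := div_self (by positivity)
  have := hχ y ((a : ℚ) / (p : ℚ) ^ k) hr0 hr1 ⟨a, k, by push_cast; ring⟩ hnorm
  rw [this]
  rw [show (2 * Real.pi * Complex.I * (((a : ℚ) / (p : ℚ) ^ k : ℚ) : ℂ))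
      = (((2 * Real.pi * ((a : ℚ) / (p : ℚ) ^ k : ℚ) : ℝ)) : ℂ) * Complex.I by push_cast; ring]
  exact Complex.norm_exp_ofReal_mul_I _
/-- Let `X = (X_γ)`, `Γ = ℚ_p/ℤ_p`, be a centered square-integrable weakly stationary process
with covariances `c γ = Cov(X_γ, X_0)` satisfying `Σ_γ c_γ = 0` and
`Σ_{|γ|>p^n} |c_γ| = O(p^{-n})`.  If the spectral density on `ℤ_p` is
`f(x) = Σ_γ c_γ·χ(γ·x) ≥ 0`, then `∫_{ℤ_p} f(x)⁻¹ dμ(x) = ∞`. -/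
theorem stmt18 (p : ℕ) [Fact p.Prime] (χ : ℚ_[p] → ℂ) (hχ : IsStdChar p χ)
    (χp : (ℚ_[p] ⧸ ballAddSubgroup p 0) → ℚ_[p] → ℂ)
    (hχp : ∀ w x : ℚ_[p], χp (QuotientAddGroup.mk w) x = χ (w * x))
    (Ω : Type*) [MeasurableSpace Ω] (P : Measure Ω) [IsProbabilityMeasure P]
    (X : (ℚ_[p] ⧸ ballAddSubgroup p 0) → Ω → ℂ)
    (hL2 : ∀ γ, MemLp (X γ) 2 P)
    (hcent : ∀ γ, ∫ ω, X γ ω ∂P = 0)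
    (c : (ℚ_[p] ⧸ ballAddSubgroup p 0) → ℂ)
    (hstat : ∀ γ γ' : ℚ_[p] ⧸ ballAddSubgroup p 0,
      ∫ ω, X γ ω * (starRingEnd ℂ) (X γ' ω) ∂P = c (γ - γ'))
    (hzero : ∑' γ, c γ = 0)
    (hdecay : ∃ C : ℝ, 0 < C ∧ ∀ n : ℕ,
      ∑' γ : {γ : ℚ_[p] ⧸ ballAddSubgroup p 0 //
          γ ∉ QuotientAddGroup.mk '' {x : ℚ_[p] | ‖x‖ ≤ (p : ℝ) ^ (n : ℤ)}},
        ‖c γ.1‖ ≤ C * (p : ℝ) ^ (-(n : ℤ)))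
    (f : ℚ_[p] → ℝ) (hfpos : ∀ x, 0 ≤ f x)
    (hfdef : ∀ x : ℚ_[p], ‖x‖ ≤ 1 → (f x : ℂ) = ∑' γ, c γ * χp γ x) :
    ∫⁻ x in Metric.closedBall (0 : ℚ_[p]) 1, (ENNReal.ofReal (f x))⁻¹ ∂(padicHaar p) = ⊤ := by
  classical
  have hp : p.Prime := Fact.out
  have hpR : (0:ℝ) < p := by exact_mod_cast hp.pos
  set μ := padicHaar p with hμdef
  have hμ1 : μ (Metric.closedBall (0 : ℚ_[p]) 1) = 1 := padicHaar_unitBall p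
  have hχpnorm : ∀ (γ : ℚ_[p] ⧸ ballAddSubgroup p 0) (x : ℚ_[p]), ‖χp γ x‖ = 1 := by
    intro γ x
    obtain ⟨w, rfl⟩ := QuotientAddGroup.mk_surjective γ
    rw [hχp]; exact stdChar_norm hχ _
  set S : ℕ → Set (ℚ_[p] ⧸ ballAddSubgroup p 0) :=
    fun n => QuotientAddGroup.mk '' {x : ℚ_[p] | ‖x‖ ≤ (p : ℝ) ^ (n : ℤ)} with hS
  have hχpone : ∀ (n : ℕ) (x : ℚ_[p]), ‖x‖ ≤ (p:ℝ)^(-(n:ℤ)) →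
      ∀ γ ∈ S n, χp γ x = 1 := by
    intro n x hx γ hγ
    obtain ⟨w, hw, rfl⟩ := hγ
    rw [hχp]
    apply stdChar_one hχ
    rw [norm_mul]
    calc ‖w‖ * ‖x‖ ≤ (p:ℝ)^(n:ℤ) * (p:ℝ)^(-(n:ℤ)) :=
          mul_le_mul hw hx (norm_nonneg _) (by positivity)
      _ = 1 := by rw [← zpow_add₀ (ne_of_gt hpR)]; simp
  have hpow1 : ∀ n : ℕ, (p:ℝ)^(-(n:ℤ)) ≤ 1 := by
    intro n
    apply zpow_le_one_of_nonpos₀ (by exact_mod_cast hp.one_lt.le)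
    omega
  by_cases hsum : Summable (fun γ => ‖c γ‖)
  · -- c is absolutely summable: main argument
    obtain ⟨C, hC, hdec⟩ := hdecay
    have hcs : Summable c := hsum.of_norm
    have hgs : ∀ x : ℚ_[p], Summable (fun γ => c γ * χp γ x) := by
      intro x
      apply Summable.of_norm
      simpa [hχpnorm] using hsum
    have key : ∀ (n : ℕ) (x : ℚ_[p]), ‖x‖ ≤ (p:ℝ)^(-(n:ℤ)) →
        f x ≤ 2 * C * (p:ℝ)^(-(n:ℤ)) := by
      intro n x hx
      have hfx : (f x : ℂ) = ∑' γ, c γ * χp γ x := hfdef x (hx.trans (hpow1 n))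
      have hsplitg : (∑' γ : S n, c γ.1 * χp γ.1 x) + (∑' γ : ↥(S n)ᶜ, c γ.1 * χp γ.1 x)
          = ∑' γ, c γ * χp γ x :=
        Summable.tsum_add_tsum_compl ((hgs x).subtype _) ((hgs x).subtype _)
      have hsplitc : (∑' γ : S n, c γ.1) + (∑' γ : ↥(S n)ᶜ, c γ.1) = ∑' γ, c γ :=
        Summable.tsum_add_tsum_compl (hcs.subtype _) (hcs.subtype _)
      have hgc : (∑' γ : S n, c γ.1 * χp γ.1 x) = ∑' γ : S n, c γ.1 := by
        apply tsum_congr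
        intro γ
        rw [hχpone n x hx γ.1 γ.2, mul_one]
      have hT : (∑' γ : ↥(S n)ᶜ, ‖c γ.1‖) ≤ C * (p:ℝ)^(-(n:ℤ)) := hdec n
      have hnormg : ‖∑' γ : ↥(S n)ᶜ, c γ.1 * χp γ.1 x‖ ≤ C * (p:ℝ)^(-(n:ℤ)) := by
        calc ‖∑' γ : ↥(S n)ᶜ, c γ.1 * χp γ.1 x‖
            ≤ ∑' γ : ↥(S n)ᶜ, ‖c γ.1 * χp γ.1 x‖ :=
              norm_tsum_le_tsum_norm (by
                have := hsum.subtype ((S n)ᶜ)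
                simp only [norm_mul, hχpnorm, mul_one]; exact this)
          _ = ∑' γ : ↥(S n)ᶜ, ‖c γ.1‖ := by
              apply tsum_congr; intro γ; rw [norm_mul, hχpnorm, mul_one]
          _ ≤ _ := hT
      have hnormc : ‖∑' γ : ↥(S n)ᶜ, c γ.1‖ ≤ C * (p:ℝ)^(-(n:ℤ)) :=
        (norm_tsum_le_tsum_norm (hsum.subtype _)).trans hT
      have h0 : (∑' γ : S n, c γ.1) = - (∑' γ : ↥(S n)ᶜ, c γ.1) := by
        have := hsplitc.trans hzero
        linear_combination this
      have hfc : (f x : ℂ) = (∑' γ : ↥(S n)ᶜ, c γ.1 * χp γ.1 x)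
          - (∑' γ : ↥(S n)ᶜ, c γ.1) := by
        rw [hfx, ← hsplitg, hgc, h0]; ring
      have habs : |f x| ≤ 2 * C * (p:ℝ)^(-(n:ℤ)) := by
        calc |f x| = ‖(f x : ℂ)‖ := by rw [Complex.norm_real, Real.norm_eq_abs]
          _ = ‖(∑' γ : ↥(S n)ᶜ, c γ.1 * χp γ.1 x) - (∑' γ : ↥(S n)ᶜ, c γ.1)‖ := by rw [hfc]
          _ ≤ ‖∑' γ : ↥(S n)ᶜ, c γ.1 * χp γ.1 x‖ + ‖∑' γ : ↥(S n)ᶜ, c γ.1‖ := norm_sub_le _ _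
          _ ≤ C * (p:ℝ)^(-(n:ℤ)) + C * (p:ℝ)^(-(n:ℤ)) := add_le_add hnormg hnormc
          _ = 2 * C * (p:ℝ)^(-(n:ℤ)) := by ring
      exact (le_abs_self _).trans habs
    -- now the integral estimate
    set q : ℝ≥0∞ := (p : ℝ≥0∞) with hq
    set Bn : ℕ → Set ℚ_[p] := fun n => Metric.closedBall (0:ℚ_[p]) ((p:ℝ)^(-(n:ℤ))) with hBn
    have hBnmeas : ∀ n, MeasurableSet (Bn n) := fun n => Metric.isClosed_closedBall.measurableSet
    have hBnμ : ∀ n, μ (Bn n) = (q ^ n)⁻¹ := fun n => padicHaar_ball p n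
    have hBmono : ∀ n, Bn (n+1) ⊆ Bn n := by
      intro n
      apply Metric.closedBall_subset_closedBall
      apply zpow_le_zpow_right₀ (by exact_mod_cast hp.one_lt.le)
      omega
    have hBsub1 : ∀ n, Bn n ⊆ Metric.closedBall (0:ℚ_[p]) 1 := by
      intro n
      exact Metric.closedBall_subset_closedBall (hpow1 n)
    have hq1 : 1 < q := by
      rw [hq]
      exact_mod_cast hp.one_lt
    have hq0 : q ≠ 0 := by positivity
    have hqt : q ≠ ⊤ := by rw [hq]; exact ENNReal.natCast_ne_top p
    have hqn0 : ∀ n : ℕ, q ^ n ≠ 0 := fun n => pow_ne_zero n hq0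
    have hqnt : ∀ n : ℕ, q ^ n ≠ ⊤ := fun n => ENNReal.pow_ne_top hqt
    set ε : ℝ≥0∞ := (1 - q⁻¹) * (ENNReal.ofReal (2*C))⁻¹ with hε
    have h2C : (0:ℝ) < 2*C := by linarith
    have hofc0 : ENNReal.ofReal (2*C) ≠ 0 := by
      simp [ENNReal.ofReal_eq_zero]; linarith
    have hofct : ENNReal.ofReal (2*C) ≠ ⊤ := ENNReal.ofReal_ne_top
    have hε0 : ε ≠ 0 := by
      rw [hε]
      apply mul_ne_zero
      · have hlt : q⁻¹ < 1 := ENNReal.inv_lt_one.2 hq1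
        exact (tsub_pos_of_lt hlt).ne'
      · exact ENNReal.inv_ne_zero.2 hofct
    have hεt : ε ≠ ⊤ := by
      rw [hε]
      exact ENNReal.mul_ne_top (by
        exact ENNReal.sub_ne_top (by simp)) (ENNReal.inv_ne_top.2 hofc0)
    -- measure of shells
    have hshellμ : ∀ n, μ (Bn n \ Bn (n+1)) = (q^n)⁻¹ - (q^(n+1))⁻¹ := by
      intro n
      rw [measure_diff (hBmono n) (hBnmeas (n+1)).nullMeasurableSet
        (by rw [hBnμ]; exact ENNReal.inv_ne_top.2 (hqn0 _)), hBnμ, hBnμ]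
    -- per-shell lower bound
    have hshell : ∀ n, ε ≤ ∫⁻ x in Bn n \ Bn (n+1), (ENNReal.ofReal (f x))⁻¹ ∂μ := by
      intro n
      have hpt : ∀ x ∈ Bn n \ Bn (n+1),
          (ENNReal.ofReal (2 * C * (p:ℝ)^(-(n:ℤ))))⁻¹ ≤ (ENNReal.ofReal (f x))⁻¹ := by
        intro x hx
        apply ENNReal.inv_le_inv'
        apply ENNReal.ofReal_le_ofReal
        apply key n x
        have := hx.1
        simpa [hBn, Metric.mem_closedBall, dist_eq_norm] using this
      calc ε = (ENNReal.ofReal (2 * C * (p:ℝ)^(-(n:ℤ))))⁻¹ * μ (Bn n \ Bn (n+1)) := by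
            rw [hshellμ n]
            rw [ENNReal.ofReal_mul h2C.le]
            have hpow : ENNReal.ofReal ((p:ℝ)^(-(n:ℤ))) = (q^n)⁻¹ := by
              rw [show (p:ℝ)^(-(n:ℤ)) = ((p:ℝ)^n)⁻¹ by
                rw [zpow_neg, zpow_natCast]]
              rw [ENNReal.ofReal_inv_of_pos (by positivity), ENNReal.ofReal_pow hpR.le]
              congr 1
              rw [hq]
              congr 1
              exact ENNReal.ofReal_natCast p
            rw [hpow, ENNReal.mul_inv (Or.inl hofc0) (Or.inl hofct), inv_inv, hε]
            rw [mul_comm ((ENNReal.ofReal (2*C))⁻¹) (q^n), mul_assoc,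
              mul_comm ((ENNReal.ofReal (2*C))⁻¹) (((q^n)⁻¹ - (q^(n+1))⁻¹)), ← mul_assoc]
            congr 1
            rw [ENNReal.mul_sub (fun _ _ => hqnt n),
              ENNReal.mul_inv_cancel (hqn0 n) (hqnt n),
              pow_succ, ENNReal.mul_inv (Or.inl (hqn0 n)) (Or.inl (hqnt n)),
              ← mul_assoc, ENNReal.mul_inv_cancel (hqn0 n) (hqnt n), one_mul]
        _ ≤ ∫⁻ x in Bn n \ Bn (n+1), (ENNReal.ofReal (f x))⁻¹ ∂μ := by
            rw [← setLIntegral_const]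
            exact setLIntegral_mono' ((hBnmeas n).diff (hBnmeas (n+1))) hpt
    -- induction
    have hind : ∀ N : ℕ, ε * N ≤
        ∫⁻ x in Metric.closedBall (0:ℚ_[p]) 1 \ Bn N, (ENNReal.ofReal (f x))⁻¹ ∂μ := by
      intro N
      induction N with
      | zero => simp
      | succ N ih =>
        have hset : Metric.closedBall (0:ℚ_[p]) 1 \ Bn (N+1)
            = (Metric.closedBall (0:ℚ_[p]) 1 \ Bn N) ∪ (Bn N \ Bn (N+1)) :=
          (Set.diff_union_diff_cancel (hBsub1 N) (hBmono N)).symm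
        have hdisj : Disjoint (Metric.closedBall (0:ℚ_[p]) 1 \ Bn N) (Bn N \ Bn (N+1)) := by
          rw [Set.disjoint_left]
          rintro x ⟨_, hx2⟩ ⟨hx3, _⟩
          exact hx2 hx3
        rw [hset, lintegral_union ((hBnmeas N).diff (hBnmeas (N+1))) hdisj]
        push_cast
        rw [mul_add, mul_one]
        exact add_le_add ih (hshell N)
    -- conclude
    by_contra hI
    set I := ∫⁻ x in Metric.closedBall (0:ℚ_[p]) 1, (ENNReal.ofReal (f x))⁻¹ ∂μ with hIdef
    have hIbound : ∀ N : ℕ, ε * N ≤ I := by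
      intro N
      exact (hind N).trans (lintegral_mono_set Set.diff_subset)
    have hIlt : I ≠ ⊤ := hI
    have hεtR : 0 < ε.toReal := ENNReal.toReal_pos hε0 hεt
    obtain ⟨N, hN⟩ := exists_nat_gt (I.toReal / ε.toReal)
    have h1 : ε * N ≤ I := hIbound N
    have h2 : ε.toReal * N ≤ I.toReal := by
      have : (ε * N).toReal ≤ I.toReal := ENNReal.toReal_mono hIlt h1
      rwa [ENNReal.toReal_mul, ENNReal.toReal_natCast] at this
    have h3 : (N:ℝ) ≤ I.toReal / ε.toReal := by
      rw [le_div_iff₀ hεtR]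
      linarith [mul_comm ε.toReal (N:ℝ)]
    linarith
  · -- c not absolutely summable: f ≡ 0 on the unit ball
    have hf0 : ∀ x ∈ Metric.closedBall (0:ℚ_[p]) 1, f x = 0 := by
      intro x hx
      have hx1 : ‖x‖ ≤ 1 := by simpa [Metric.mem_closedBall, dist_eq_norm] using hx
      have hns : ¬ Summable (fun γ => c γ * χp γ x) := by
        intro h
        apply hsum
        have := summable_norm_iff.2 h
        simpa [hχpnorm] using this
      have := hfdef x hx1
      rw [tsum_eq_zero_of_not_summable hns] at this
      exact_mod_cast this
    have heq : ∫⁻ x in Metric.closedBall (0:ℚ_[p]) 1, (ENNReal.ofReal (f x))⁻¹ ∂μ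
        = ∫⁻ _ in Metric.closedBall (0:ℚ_[p]) 1, (⊤:ℝ≥0∞) ∂μ := by
      apply setLIntegral_congr_fun_ae Metric.isClosed_closedBall.measurableSet
      filter_upwards with x hx
      rw [hf0 x hx]
      simp
    rw [heq, setLIntegral_const]
    simp [hμ1]
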